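/- arXiv:2312.16411 — 3 statements merged into one kernel-verified Lean document; each statement's English description precedes it below -/
import Mathlib

section
/- Let ḡ be as above (with ḡ⁻¹(2t) ≤ 2^{1/(p−1)} ḡ⁻¹(t) for all t ≥ 0, p > 1), and let β > 1. Then there is a constant C = C(p, q, β) > 0 such that for any summable sequence of nonnegative reals (a_i)_{i≥1}: g⁻¹(Σᵢ aᵢ) ≤ C · Σᵢ βⁱ · g⁻¹(aᵢ). -/
/-! With `r = β ^ (p - 1) > 1` the weights `(r - 1) / r ^ (i + 1)` sum to one, so some `aᵢ`
is at least its weight times `S = ∑ aⱼ`, that is `S ≤ l * aᵢ` with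
`l = r ^ (i + 1) / (r - 1) ≥ 1`. Passing from `g⁻¹` to `ḡ⁻¹`, using monotonicity and the
scaling of `ḡ⁻¹`, and coming back gives `g⁻¹ S ≲ l ^ (1 / (p - 1)) * g⁻¹ aᵢ`, where
`l ^ (1 / (p - 1)) = β ^ (i + 1) / (r - 1) ^ (1 / (p - 1))`. -/

open Real

theorem exists_tsum_le_mul_of_hasSum_inv {c a : ℕ → ℝ} (hc : ∀ i, 0 < c i)
    (hsum : HasSum (fun i => (c i)⁻¹) 1) (ha : Summable a) :
    ∃ i, ∑' j, a j ≤ c i * a i := by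
  by_contra! h
  have hlt : ∀ i, a i < (c i)⁻¹ * ∑' j, a j := fun i => by
    rw [← div_eq_inv_mul, lt_div_iff₀' (hc i)]
    exact h i
  simpa using hasSum_lt (fun i => (hlt i).le) (hlt 0) ha.hasSum (hsum.mul_right _)

theorem hasSum_sub_one_div_pow_succ {r : ℝ} (hr : 1 < r) :
    HasSum (fun i : ℕ => (r - 1) / r ^ (i + 1)) 1 := by
  have hr0 : r ≠ 0 := by positivity
  have hr1 : r - 1 ≠ 0 := sub_ne_zero.mpr hr.ne'
  have h := (hasSum_geometric_of_lt_one (by positivity) (inv_lt_one_of_one_lt₀ hr)).mul_left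
    ((r - 1) / r)
  rw [show (r - 1) / r * (1 - r⁻¹)⁻¹ = 1 by field_simp] at h
  have hterm : (fun i : ℕ => (r - 1) / r ^ (i + 1)) = fun i => (r - 1) / r * r⁻¹ ^ i := by
    ext i
    rw [inv_pow, pow_succ]
    field_simp
  rwa [hterm]

theorem le_inv_mul_mul_rpow_mul_of_le_mul {f h : ℝ → ℝ} {A B e : ℝ} (hA : 0 < A)
    (hlower : ∀ t, 0 ≤ t → A * f t ≤ h t) (hupper : ∀ t, 0 ≤ t → h t ≤ B * f t)
    (hmono : ∀ x y, 0 ≤ x → x ≤ y → h x ≤ h y)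
    (hscale : ∀ l t, 1 ≤ l → 0 ≤ t → h (l * t) ≤ l ^ e * h t)
    {l s t : ℝ} (hl : 1 ≤ l) (hs : 0 ≤ s) (ht : 0 ≤ t) (hst : s ≤ l * t) :
    f s ≤ A⁻¹ * B * l ^ e * f t := by
  calc f s ≤ A⁻¹ * h s := (le_inv_mul_iff₀ hA).mpr (hlower s hs)
    _ ≤ A⁻¹ * (l ^ e * h t) := by
      gcongr
      exact (hmono s _ hs hst).trans (hscale l t hl ht)
    _ ≤ A⁻¹ * (l ^ e * (B * f t)) := by gcongr; exact hupper t ht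
    _ = A⁻¹ * B * l ^ e * f t := by ring

theorem stmt_8_general (p q : ℝ) (hp : 1 < p) (hpq : p ≤ q)
    (ginv gbarInv : ℝ → ℝ)
    (hmono : ∀ x y, 0 ≤ x → x ≤ y → gbarInv x ≤ gbarInv y)
    (hcomp : ∀ t : ℝ, 0 ≤ t →
      p ^ (1 / (q - 1)) * ginv t ≤ gbarInv t ∧
      gbarInv t ≤ q ^ (1 / (p - 1)) * ginv t)
    (hscale : ∀ l t : ℝ, 1 ≤ l → 0 ≤ t →
      gbarInv (l * t) ≤ l ^ (1 / (p - 1)) * gbarInv t)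
    (β : ℝ) (hβ : 1 < β) :
    ∃ C : ℝ, 0 < C ∧ ∀ a : ℕ → ℝ, (∀ i, 0 ≤ a i) → Summable a →
      ENNReal.ofReal (ginv (∑' i, a i)) ≤
        ENNReal.ofReal C * ∑' i : ℕ, ENNReal.ofReal (β ^ (i + 1) * ginv (a i)) := by
  have hp0 : 0 < p := by linarith
  have hq0 : 0 < q := by linarith
  set r := β ^ (p - 1)
  have hr : 1 < r := one_lt_rpow hβ (by linarith)
  have hr1 : 0 < r - 1 := by linarith
  set C := (p ^ (1 / (q - 1)))⁻¹ * q ^ (1 / (p - 1)) / (r - 1) ^ (1 / (p - 1))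
  refine ⟨C, by positivity, fun a ha hsum => ?_⟩
  obtain ⟨i, hi⟩ := exists_tsum_le_mul_of_hasSum_inv (c := fun i => r ^ (i + 1) / (r - 1))
    (fun i => by positivity) (by simpa only [inv_div] using hasSum_sub_one_div_pow_succ hr) hsum
  have hl : 1 ≤ r ^ (i + 1) / (r - 1) := by
    rw [one_le_div hr1]
    linarith [le_self_pow₀ (n := i + 1) hr.le (by omega)]
  have hpow : (r ^ (i + 1) / (r - 1)) ^ (1 / (p - 1)) = β ^ (i + 1) / (r - 1) ^ (1 / (p - 1)) := by
    rw [div_rpow (by positivity) hr1.le, ← rpow_pow_comm (by positivity), one_div,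
      rpow_rpow_inv (by positivity) (by linarith)]
  have key := le_inv_mul_mul_rpow_mul_of_le_mul (rpow_pos_of_pos hp0 _)
    (fun t ht => (hcomp t ht).1) (fun t ht => (hcomp t ht).2) hmono hscale hl
    (tsum_nonneg ha) (ha i) hi
  rw [hpow] at key
  calc ENNReal.ofReal (ginv (∑' j, a j))
      ≤ ENNReal.ofReal (C * (β ^ (i + 1) * ginv (a i))) :=
        ENNReal.ofReal_le_ofReal (key.trans_eq (by ring))
    _ = ENNReal.ofReal C * ENNReal.ofReal (β ^ (i + 1) * ginv (a i)) :=
        ENNReal.ofReal_mul (by positivity)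
    _ ≤ ENNReal.ofReal C * ∑' j : ℕ, ENNReal.ofReal (β ^ (j + 1) * ginv (a j)) := by
      gcongr
      exact ENNReal.le_tsum i

/-- Let `g⁻¹` be the inverse of `g`, `ḡ⁻¹` that of `ḡ(t) = G(t)/t`, with
`p^{1/(q−1)} g⁻¹(t) ≤ ḡ⁻¹(t) ≤ q^{1/(p−1)} g⁻¹(t)` and
`ḡ⁻¹(λt) ≤ λ^{1/(p−1)} ḡ⁻¹(t)` for `λ ≥ 1`.  For every `β > 1` there is
`C = C(p,q,β) > 0` such that for any summable nonnegative sequence `(aᵢ)_{i≥1}`,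
`g⁻¹(Σᵢ aᵢ) ≤ C Σᵢ βⁱ g⁻¹(aᵢ)` (the right-hand side taken in `[0,∞]`). -/
theorem stmt_8 (p q : ℝ) (hp : 1 < p) (hpq : p ≤ q)
    (ginv gbarInv : ℝ → ℝ)
    (hginv_nonneg : ∀ x, 0 ≤ x → 0 ≤ ginv x)
    (hmono : ∀ x y, 0 ≤ x → x ≤ y → gbarInv x ≤ gbarInv y)
    (hcomp : ∀ t : ℝ, 0 ≤ t →
      p ^ (1 / (q - 1)) * ginv t ≤ gbarInv t ∧
      gbarInv t ≤ q ^ (1 / (p - 1)) * ginv t)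
    (hscale : ∀ l t : ℝ, 1 ≤ l → 0 ≤ t →
      gbarInv (l * t) ≤ l ^ (1 / (p - 1)) * gbarInv t)
    (β : ℝ) (hβ : 1 < β) :
    ∃ C : ℝ, 0 < C ∧ ∀ a : ℕ → ℝ, (∀ i, 0 ≤ a i) → Summable a →
      ENNReal.ofReal (ginv (∑' i, a i)) ≤
        ENNReal.ofReal C * ∑' i : ℕ, ENNReal.ofReal (β ^ (i + 1) * ginv (a i)) :=
  stmt_8_general p q hp hpq ginv gbarInv hmono hcomp hscale β hβ
end

section
/- Let G be a Young function (G(t) = ∫₀ᵗ g with g non-decreasing). For all real numbers a₁, a₂, b₁, b₂: G(|max(a₁,a₂) − max(b₁,b₂)|) + G(|min(a₁,a₂) − min(b₁,b₂)|) ≤ G(|a₁−b₁|) + G(|a₂−b₂|). -/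
/-- For a Young function `G(t) = ∫₀ᵗ g` with `g` non-decreasing, and all reals
`a₁, a₂, b₁, b₂`:
`G(|a₁∨a₂ − b₁∨b₂|) + G(|a₁∧a₂ − b₁∧b₂|) ≤ G(|a₁−b₁|) + G(|a₂−b₂|)`. -/
theorem stmt_9 (g G : ℝ → ℝ)
    (hg_mono : ∀ x y, 0 ≤ x → x ≤ y → g x ≤ g y)
    (hg_nonneg : ∀ x, 0 ≤ x → 0 ≤ g x)
    (hG : ∀ t, G t = ∫ τ in (0:ℝ)..t, g τ) :
    ∀ a₁ a₂ b₁ b₂ : ℝ,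
      G |max a₁ a₂ - max b₁ b₂| + G |min a₁ a₂ - min b₁ b₂| ≤
        G |a₁ - b₁| + G |a₂ - b₂| := by
  -- integrability of g on nonneg intervals
  have hint : ∀ x y : ℝ, 0 ≤ x → 0 ≤ y →
      IntervalIntegrable g MeasureTheory.volume x y := by
    intro x y hx hy
    apply MonotoneOn.intervalIntegrable
    intro u hu v hv huv
    have hu0 : 0 ≤ u := le_trans (le_min hx hy) hu.1
    exact hg_mono u v hu0 huv
  -- G y - G x = ∫ x..y g for 0 ≤ x, 0 ≤ y
  have hGdiff : ∀ x y : ℝ, 0 ≤ x → 0 ≤ y →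
      G y = G x + ∫ τ in x..y, g τ := by
    intro x y hx hy
    rw [hG, hG]
    rw [intervalIntegral.integral_add_adjacent_intervals (hint 0 x le_rfl hx)
      (hint x y hx hy)]
  have hGmono : ∀ x y : ℝ, 0 ≤ x → x ≤ y → G x ≤ G y := by
    intro x y hx hxy
    rw [hGdiff x y hx (hx.trans hxy)]
    have : 0 ≤ ∫ τ in x..y, g τ :=
      intervalIntegral.integral_nonneg hxy (fun u hu => hg_nonneg u (hx.trans hu.1))
    linarith
  -- Hardy-type two point weak majorization
  have hardy : ∀ M m d₁ d₂ : ℝ, 0 ≤ m → m ≤ M → 0 ≤ d₂ → M ≤ d₁ →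
      M + m ≤ d₁ + d₂ → G M + G m ≤ G d₁ + G d₂ := by
    intro M m d₁ d₂ hm hmM hd₂ hMd₁ hsum
    have hM : 0 ≤ M := hm.trans hmM
    have hd₁ : 0 ≤ d₁ := hM.trans hMd₁
    rcases le_total m d₂ with h | h
    · have := hGmono m d₂ hm h
      have := hGmono M d₁ hM hMd₁
      linarith
    · -- d₂ ≤ m ≤ M ≤ d₁, m - d₂ ≤ d₁ - M
      have h1 : G m = G d₂ + ∫ τ in d₂..m, g τ := hGdiff d₂ m hd₂ hm
      have h2 : G d₁ = G M + ∫ τ in M..d₁, g τ := hGdiff M d₁ hM hd₁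
      have key : (∫ τ in d₂..m, g τ) ≤ ∫ τ in M..d₁, g τ := by
        have e1 : (∫ τ in d₂..m, g τ) ≤ (m - d₂) * g m := by
          have := intervalIntegral.integral_mono_on h (hint d₂ m hd₂ hm)
            (intervalIntegrable_const (c := g m))
            (fun u hu => hg_mono u m (hd₂.trans hu.1) hu.2)
          simpa using this
        have e2 : (d₁ - M) * g M ≤ ∫ τ in M..d₁, g τ := by
          have := intervalIntegral.integral_mono_on hMd₁
            (intervalIntegrable_const (c := g M)) (hint M d₁ hM hd₁)
            (fun u hu => hg_mono M u hM hu.1)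
          simpa using this
        have e3 : (m - d₂) * g m ≤ (d₁ - M) * g M := by
          have hg1 : g m ≤ g M := hg_mono m M hm hmM
          have hg2 : 0 ≤ g m := hg_nonneg m hm
          nlinarith
        linarith
      linarith
  -- combinatorial facts
  intro a₁ a₂ b₁ b₂
  set M := |max a₁ a₂ - max b₁ b₂| with hMdef
  set m := |min a₁ a₂ - min b₁ b₂| with hmdef
  have hMle : M ≤ max |a₁ - b₁| |a₂ - b₂| := abs_max_sub_max_le_max a₁ a₂ b₁ b₂
  have hmle : m ≤ max |a₁ - b₁| |a₂ - b₂| := abs_min_sub_min_le_max a₁ a₂ b₁ b₂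
  have hsum : M + m ≤ |a₁ - b₁| + |a₂ - b₂| := by
    rcases le_total a₁ a₂ with h | h <;> rcases le_total b₁ b₂ with h' | h' <;>
      simp only [hMdef, hmdef, max_eq_right, max_eq_left, min_eq_left, min_eq_right, h, h'] <;>
      rcases abs_cases (a₁ - b₁) with ⟨e1, _⟩ | ⟨e1, _⟩ <;>
      rcases abs_cases (a₂ - b₂) with ⟨e2, _⟩ | ⟨e2, _⟩ <;>
      rcases abs_cases (a₁ - b₂) with ⟨e3, _⟩ | ⟨e3, _⟩ <;>
      rcases abs_cases (a₂ - b₁) with ⟨e4, _⟩ | ⟨e4, _⟩ <;>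
      linarith
  have hM0 : 0 ≤ M := abs_nonneg _
  have hm0 : 0 ≤ m := abs_nonneg _
  rcases le_total m M with hmM | hmM
  · rcases le_total |a₂ - b₂| |a₁ - b₁| with hd | hd
    · exact hardy M m |a₁ - b₁| |a₂ - b₂| hm0 hmM (abs_nonneg _)
        (by simpa [max_eq_left hd] using hMle) hsum
    · have := hardy M m |a₂ - b₂| |a₁ - b₁| hm0 hmM (abs_nonneg _)
        (by simpa [max_eq_right hd] using hMle) (by linarith)
      linarith
  · rcases le_total |a₂ - b₂| |a₁ - b₁| with hd | hd
    · have := hardy m M |a₁ - b₁| |a₂ - b₂| hM0 hmM (abs_nonneg _)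
        (by simpa [max_eq_left hd] using hmle) (by linarith)
      linarith
    · have := hardy m M |a₂ - b₂| |a₁ - b₁| hM0 hmM (abs_nonneg _)
        (by simpa [max_eq_right hd] using hmle) (by linarith)
      linarith
end

section
/- Under the structural assumptions pG(t) ≤ tg(t) ≤ qG(t) (1 < p ≤ q), with c = p^{1/(q−1)}/q^{1/(p−1)}, for λ ≥ 1 and t ≥ 0: c·λ^{1/(q−1)}·g⁻¹(t) ≤ g⁻¹(λt) ≤ c⁻¹·λ^{1/(p−1)}·g⁻¹(t). -/
/-! The inequalities `pG ≤ tg ≤ qG` say that the logarithmic derivative of `G` lies between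
`p/x` and `q/x`, so `x ↦ x^{-q} G(x)` decreases and `x ↦ x^{-p} G(x)` increases; hence
`s^p G(t) ≤ G(st) ≤ s^q G(t)` for `s ≥ 1`. Feeding this back into `pG ≤ tg ≤ qG` gives
`(p/q) s^{p-1} g(t) ≤ g(st) ≤ (q/p) s^{q-1} g(t)`. Applied at `u = g⁻¹(t)` with
`s = c λ^{1/(q-1)}` and `s = c⁻¹ λ^{1/(p-1)}`, and inverted through the increasing `g`, these give
the two bounds: `c` is chosen so that `(q/p) c^{q-1} ≤ 1` and `c^{p-1} ≤ p/q`. -/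

open Real Set

theorem hasDerivAt_integral_of_continuousOn_Ici {f : ℝ → ℝ} {a x : ℝ}
    (hf : ContinuousOn f (Ici a)) (hx : a < x) :
    HasDerivAt (fun t => ∫ τ in a..t, f τ) (f x) x :=
  intervalIntegral.integral_hasDerivAt_right
    ((hf.mono (uIcc_of_le hx.le ▸ Icc_subset_Ici_self)).intervalIntegrable)
    ((hf.mono Ioi_subset_Ici_self).stronglyMeasurableAtFilter isOpen_Ioi x hx)
    ((hf x hx.le).continuousAt (Ici_mem_nhds hx))

theorem le_iff_apply_le_of_rightInvOn {α β : Type*} [LinearOrder α] [Preorder β]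
    {f : α → β} {finv : β → α} {s : Set α} {t : Set β} (hf : StrictMonoOn f s)
    (hinv : RightInvOn finv f t) (hmaps : MapsTo finv t s) {x : α} {y : β}
    (hx : x ∈ s) (hy : y ∈ t) : x ≤ finv y ↔ f x ≤ y := by
  conv_rhs => rw [← hinv hy]
  exact (hf.le_iff_le hx (hmaps hy)).symm

theorem le_iff_le_apply_of_rightInvOn {α β : Type*} [LinearOrder α] [Preorder β]
    {f : α → β} {finv : β → α} {s : Set α} {t : Set β} (hf : StrictMonoOn f s)
    (hinv : RightInvOn finv f t) (hmaps : MapsTo finv t s) {x : α} {y : β}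
    (hx : x ∈ s) (hy : y ∈ t) : finv y ≤ x ↔ y ≤ f x := by
  conv_rhs => rw [← hinv hy]
  exact (hf.le_iff_le (hmaps hy) hx).symm

section PowerGrowth

variable {F F' : ℝ → ℝ} {q : ℝ}

theorem antitoneOn_rpow_neg_mul_of_mul_deriv_le (hF : ∀ x, 0 < x → HasDerivAt F (F' x) x)
    (hbound : ∀ x, 0 < x → x * F' x ≤ q * F x) :
    AntitoneOn (fun x => x ^ (-q) * F x) (Ioi 0) := by
  have hderiv : ∀ x, 0 < x →
      HasDerivAt (fun x => x ^ (-q) * F x) (x ^ (-q - 1) * (x * F' x - q * F x)) x := by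
    intro x hx
    have h : HasDerivAt (fun x => x ^ (-q) * F x) _ x :=
      (hasDerivAt_rpow_const (p := -q) (Or.inl hx.ne')).mul (hF x hx)
    convert h using 1
    rw [show x ^ (-q) = x ^ (-q - 1) * x by rw [← rpow_add_one hx.ne']; ring_nf]
    ring
  refine antitoneOn_of_deriv_nonpos (convex_Ioi 0)
    (fun x hx => (hderiv x hx).continuousAt.continuousWithinAt)
    (fun x hx => (hderiv x (interior_subset hx)).differentiableAt.differentiableWithinAt)
    (fun x hx => ?_)
  rw [interior_Ioi] at hx
  rw [(hderiv x hx).deriv]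
  exact mul_nonpos_of_nonneg_of_nonpos (rpow_nonneg hx.le _) (sub_nonpos.2 (hbound x hx))

theorem apply_mul_le_rpow_mul_of_mul_deriv_le (hF : ∀ x, 0 < x → HasDerivAt F (F' x) x)
    (hbound : ∀ x, 0 < x → x * F' x ≤ q * F x) {s t : ℝ} (hs : 1 ≤ s) (ht : 0 < t) :
    F (s * t) ≤ s ^ q * F t := by
  have hs0 : 0 < s := one_pos.trans_le hs
  have hst : 0 < s * t := mul_pos hs0 ht
  have h := antitoneOn_rpow_neg_mul_of_mul_deriv_le hF hbound ht hst
    (le_mul_of_one_le_left ht.le hs)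
  simp only [mul_rpow hs0.le ht.le, rpow_neg hs0.le, rpow_neg ht.le] at h
  have hsq : 0 < s ^ q := rpow_pos_of_pos hs0 q
  have htq : 0 < t ^ q := rpow_pos_of_pos ht q
  calc F (s * t) = s ^ q * t ^ q * ((s ^ q)⁻¹ * (t ^ q)⁻¹ * F (s * t)) := by field_simp
    _ ≤ s ^ q * t ^ q * ((t ^ q)⁻¹ * F t) := by gcongr
    _ = s ^ q * F t := by field_simp

theorem rpow_mul_le_apply_mul_of_le_mul_deriv (hF : ∀ x, 0 < x → HasDerivAt F (F' x) x)
    (hbound : ∀ x, 0 < x → q * F x ≤ x * F' x) {s t : ℝ} (hs : 1 ≤ s) (ht : 0 < t) :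
    s ^ q * F t ≤ F (s * t) := by
  simpa using apply_mul_le_rpow_mul_of_mul_deriv_le (F := -F) (F' := -F')
    (fun x hx => (hF x hx).neg) (fun x hx => by simpa using hbound x hx) hs ht

end PowerGrowth

noncomputable def scalingConst (p q : ℝ) : ℝ := p ^ (1 / (q - 1)) / q ^ (1 / (p - 1))

section ScalingConst

variable {p q : ℝ}

theorem scalingConst_pos (hp : 0 < p) (hq : 0 < q) : 0 < scalingConst p q := by
  unfold scalingConst; positivity

theorem scalingConst_le_one (hp : 1 < p) (hpq : p ≤ q) : scalingConst p q ≤ 1 := by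
  have hp1 : 0 < p - 1 := by linarith
  have hq0 : 0 < q := by linarith
  rw [scalingConst, div_le_one (by positivity)]
  calc p ^ (1 / (q - 1)) ≤ p ^ (1 / (p - 1)) :=
        rpow_le_rpow_of_exponent_le hp.le (one_div_le_one_div_of_le hp1 (by linarith))
    _ ≤ q ^ (1 / (p - 1)) := rpow_le_rpow (by positivity) hpq (by positivity)

theorem div_mul_scalingConst_rpow_le_one (hp : 1 < p) (hpq : p ≤ q) :
    q / p * scalingConst p q ^ (q - 1) ≤ 1 := by
  have hq : 1 < q := hp.trans_le hpq
  have hp1 : 0 < p - 1 := by linarith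
  have hq0 : 0 < q := by linarith
  have hexp : q ≤ q ^ (1 / (p - 1) * (q - 1)) := by
    conv_lhs => rw [← rpow_one q]
    refine rpow_le_rpow_of_exponent_le hq.le ?_
    rw [one_div_mul_eq_div, le_div_iff₀ hp1]
    linarith
  rw [scalingConst, div_rpow (by positivity) (by positivity), ← rpow_mul (by positivity),
    ← rpow_mul hq0.le, one_div_mul_cancel (by linarith), rpow_one, div_mul_div_comm,
    div_le_one (by positivity)]
  nlinarith

theorem scalingConst_rpow_le_div (hp : 1 < p) (hpq : p ≤ q) :
    scalingConst p q ^ (p - 1) ≤ p / q := by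
  have hq : 1 < q := hp.trans_le hpq
  have hp0 : 0 < p := by linarith
  have hq1 : 0 < q - 1 := by linarith
  have hexp : p ^ (1 / (q - 1) * (p - 1)) ≤ p := by
    conv_rhs => rw [← rpow_one p]
    refine rpow_le_rpow_of_exponent_le hp.le ?_
    rw [one_div_mul_eq_div, div_le_one hq1]
    linarith
  rw [scalingConst, div_rpow (by positivity) (by positivity), ← rpow_mul hp0.le,
    ← rpow_mul (by positivity), one_div_mul_cancel (by linarith), rpow_one]
  gcongr

end ScalingConst

section Young

variable {g G : ℝ → ℝ} {p q : ℝ}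

theorem apply_mul_le_of_mul_deriv_bounds (hp : 0 < p) (hpq : p ≤ q)
    (hG : ∀ x, 0 < x → HasDerivAt G (g x) x)
    (hpG : ∀ x, 0 < x → p * G x ≤ x * g x) (hqG : ∀ x, 0 < x → x * g x ≤ q * G x)
    (hg0 : g 0 = 0) {s t : ℝ} (hs : 1 ≤ s) (ht : 0 ≤ t) :
    g (s * t) ≤ q / p * s ^ (q - 1) * g t := by
  rcases ht.eq_or_lt with rfl | ht
  · simp [hg0]
  have hs0 : 0 < s := one_pos.trans_le hs
  have hst : 0 < s * t := mul_pos hs0 ht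
  have hGt : G t ≤ t * g t / p := by rw [le_div_iff₀ hp]; linarith [hpG t ht]
  have hq : 0 ≤ q := hp.le.trans hpq
  refine le_of_mul_le_mul_right ?_ hst
  calc g (s * t) * (s * t) ≤ q * G (s * t) := by linarith [hqG _ hst]
    _ ≤ q * (s ^ q * G t) := by
      gcongr
      exact apply_mul_le_rpow_mul_of_mul_deriv_le hG hqG hs ht
    _ ≤ q * (s ^ q * (t * g t / p)) := by gcongr
    _ = q / p * s ^ (q - 1) * g t * (s * t) := by
      rw [rpow_sub_one hs0.ne']
      field_simp

theorem le_apply_mul_of_mul_deriv_bounds (hp : 0 < p) (hpq : p ≤ q)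
    (hG : ∀ x, 0 < x → HasDerivAt G (g x) x)
    (hpG : ∀ x, 0 < x → p * G x ≤ x * g x) (hqG : ∀ x, 0 < x → x * g x ≤ q * G x)
    (hg0 : g 0 = 0) {s t : ℝ} (hs : 1 ≤ s) (ht : 0 ≤ t) :
    p / q * s ^ (p - 1) * g t ≤ g (s * t) := by
  rcases ht.eq_or_lt with rfl | ht
  · simp [hg0]
  have hs0 : 0 < s := one_pos.trans_le hs
  have hst : 0 < s * t := mul_pos hs0 ht
  have hq : 0 < q := hp.trans_le hpq
  have hGt : t * g t / q ≤ G t := by rw [div_le_iff₀ hq]; linarith [hqG t ht]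
  refine le_of_mul_le_mul_right ?_ hst
  calc p / q * s ^ (p - 1) * g t * (s * t) = p * (s ^ p * (t * g t / q)) := by
        rw [rpow_sub_one hs0.ne']
        field_simp
    _ ≤ p * (s ^ p * G t) := by gcongr
    _ ≤ p * G (s * t) := by
      gcongr
      exact rpow_mul_le_apply_mul_of_le_mul_deriv hG hpG hs ht
    _ ≤ g (s * t) * (s * t) := by linarith [hpG _ hst]

theorem apply_scalingConst_mul_le (hp : 1 < p) (hpq : p ≤ q) (hg : MonotoneOn g (Ici 0))
    (hG : ∀ x, 0 < x → HasDerivAt G (g x) x)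
    (hpG : ∀ x, 0 < x → p * G x ≤ x * g x) (hqG : ∀ x, 0 < x → x * g x ≤ q * G x)
    (hg0 : g 0 = 0) {l u : ℝ} (hl : 1 ≤ l) (hu : 0 ≤ u) :
    g (scalingConst p q * l ^ (1 / (q - 1)) * u) ≤ l * g u := by
  have hl0 : 0 < l := one_pos.trans_le hl
  have hc := scalingConst_pos (p := p) (q := q) (by linarith) (by linarith)
  have hgu : 0 ≤ g u := hg0 ▸ hg self_mem_Ici hu hu
  have hs0 : 0 ≤ scalingConst p q * l ^ (1 / (q - 1)) := by positivity
  set s := scalingConst p q * l ^ (1 / (q - 1))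
  rcases le_total s 1 with hs | hs
  · calc g (s * u) ≤ g u := hg (mul_nonneg hs0 hu) hu (mul_le_of_le_one_left hu hs)
      _ ≤ l * g u := le_mul_of_one_le_left hgu hl
  · have hsq : s ^ (q - 1) = scalingConst p q ^ (q - 1) * l := by
      rw [mul_rpow hc.le (by positivity), ← rpow_mul hl0.le, one_div_mul_cancel (by linarith),
        rpow_one]
    calc g (s * u) ≤ q / p * s ^ (q - 1) * g u :=
          apply_mul_le_of_mul_deriv_bounds (by linarith) hpq hG hpG hqG hg0 hs hu
      _ = (q / p * scalingConst p q ^ (q - 1)) * (l * g u) := by rw [hsq]; ring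
      _ ≤ l * g u :=
          mul_le_of_le_one_left (by positivity) (div_mul_scalingConst_rpow_le_one hp hpq)

theorem le_apply_inv_scalingConst_mul (hp : 1 < p) (hpq : p ≤ q)
    (hG : ∀ x, 0 < x → HasDerivAt G (g x) x)
    (hpG : ∀ x, 0 < x → p * G x ≤ x * g x) (hqG : ∀ x, 0 < x → x * g x ≤ q * G x)
    (hg0 : g 0 = 0) {l u : ℝ} (hl : 1 ≤ l) (hu : 0 ≤ u) (hgu : 0 ≤ g u) :
    l * g u ≤ g ((scalingConst p q)⁻¹ * l ^ (1 / (p - 1)) * u) := by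
  have hl0 : 0 < l := one_pos.trans_le hl
  have hc := scalingConst_pos (p := p) (q := q) (by linarith) (by linarith)
  have hcp : 0 < scalingConst p q ^ (p - 1) := by positivity
  set s := (scalingConst p q)⁻¹ * l ^ (1 / (p - 1))
  have hs : 1 ≤ s := one_le_mul_of_one_le_of_one_le
    ((one_le_inv₀ hc).2 (scalingConst_le_one hp hpq))
    (one_le_rpow hl (one_div_nonneg.2 (by linarith)))
  have hsp : s ^ (p - 1) = (scalingConst p q ^ (p - 1))⁻¹ * l := by
    rw [mul_rpow (by positivity) (by positivity), inv_rpow hc.le, ← rpow_mul hl0.le,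
      one_div_mul_cancel (by linarith), rpow_one]
  calc l * g u ≤ (p / q * (scalingConst p q ^ (p - 1))⁻¹) * (l * g u) := by
        refine le_mul_of_one_le_left (by positivity) ?_
        rw [← div_eq_mul_inv, le_div_iff₀ hcp, one_mul]
        exact scalingConst_rpow_le_div hp hpq
    _ = p / q * s ^ (p - 1) * g u := by rw [hsp]; ring
    _ ≤ g (s * u) := le_apply_mul_of_mul_deriv_bounds (by linarith) hpq hG hpG hqG hg0 hs hu

end Young

/-- Under `pG(t) ≤ tg(t) ≤ qG(t)` (`1 < p ≤ q`), with `c = p^{1/(q−1)}/q^{1/(p−1)}`,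
for `λ ≥ 1` and `t ≥ 0`:
`c·λ^{1/(q−1)}·g⁻¹(t) ≤ g⁻¹(λt) ≤ c⁻¹·λ^{1/(p−1)}·g⁻¹(t)`. -/
theorem stmt_12 (g G ginv : ℝ → ℝ) (p q : ℝ) (hp : 1 < p) (hpq : p ≤ q)
    (hg_mono : StrictMonoOn g (Set.Ici (0:ℝ)))
    (hg_cont : ContinuousOn g (Set.Ici (0:ℝ)))
    (hg_nonneg : ∀ x, 0 ≤ x → 0 ≤ g x)
    (hG : ∀ t, G t = ∫ τ in (0:ℝ)..t, g τ)
    (hpG : ∀ t, 0 ≤ t → p * G t ≤ t * g t)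
    (hqG : ∀ t, 0 ≤ t → t * g t ≤ q * G t)
    (hinv_left : ∀ t, 0 ≤ t → ginv (g t) = t)
    (hinv_right : ∀ t, 0 ≤ t → g (ginv t) = t)
    (hinv_nonneg : ∀ t, 0 ≤ t → 0 ≤ ginv t) :
    ∀ l t : ℝ, 1 ≤ l → 0 ≤ t →
      (p ^ (1 / (q - 1)) / q ^ (1 / (p - 1))) * l ^ (1 / (q - 1)) * ginv t ≤ ginv (l * t) ∧
      ginv (l * t) ≤ (p ^ (1 / (q - 1)) / q ^ (1 / (p - 1)))⁻¹ * l ^ (1 / (p - 1)) * ginv t := by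
  have hderiv : ∀ x, 0 < x → HasDerivAt G (g x) x := fun x hx => by
    rw [funext hG]
    exact hasDerivAt_integral_of_continuousOn_Ici hg_cont hx
  have hpG' : ∀ x, 0 < x → p * G x ≤ x * g x := fun x hx => hpG x hx.le
  have hqG' : ∀ x, 0 < x → x * g x ≤ q * G x := fun x hx => hqG x hx.le
  have hg0 : g 0 = 0 := by
    refine le_antisymm ?_ (hg_nonneg 0 le_rfl)
    calc g 0 ≤ g (ginv 0) :=
          hg_mono.monotoneOn self_mem_Ici (hinv_nonneg 0 le_rfl) (hinv_nonneg 0 le_rfl)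
      _ = 0 := hinv_right 0 le_rfl
  intro l t hl ht
  have hp0 : 0 < p := by linarith
  have hq0 : 0 < q := by linarith
  have hl0 : 0 < l := by linarith
  obtain ⟨u, hu, rfl⟩ : ∃ u, 0 ≤ u ∧ g u = t := ⟨ginv t, hinv_nonneg t ht, hinv_right t ht⟩
  have hlt : 0 ≤ l * g u := by positivity
  rw [hinv_left u hu]
  constructor
  · rw [le_iff_apply_le_of_rightInvOn hg_mono hinv_right hinv_nonneg _ hlt]
    · exact apply_scalingConst_mul_le hp hpq hg_mono.monotoneOn hderiv hpG' hqG' hg0 hl hu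
    · exact mem_Ici.2 (by positivity)
  · rw [le_iff_le_apply_of_rightInvOn hg_mono hinv_right hinv_nonneg _ hlt]
    · exact le_apply_inv_scalingConst_mul hp hpq hderiv hpG' hqG' hg0 hl hu ht
    · exact mem_Ici.2 (by positivity)
end
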